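/- arXiv:1305.4795 — 3 statements merged into one kernel-verified Lean document; each statement's English description precedes it below -/
import Mathlib

section
/- Let T be a real-valued random variable with the normal distribution N(μ, σ²), σ > 0, let α ∈ (0,1) and λ ∈ [0,1], and let ξ(α) = μ + σ·Φ⁻¹(α). Define the alpha-reliable combined mean travel time ψ(α; λ) = λ·E[T | T ≤ ξ(α)] + (1−λ)·E[T | T ≥ ξ(α)]. Then ψ(α; λ) = μ + ((α−λ)·σ/(√(2π)·α·(1−α)))·exp(−[Φ⁻¹(α)]²/2). -/
open MeasureTheory ProbabilityTheory

/-- The cumulative distribution function `Φ` of the standard normal distribution. -/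
noncomputable def stdNormalCDF (y : ℝ) : ℝ :=
  ∫ x in Set.Iic y, (Real.sqrt (2 * Real.pi))⁻¹ * Real.exp (-(x ^ 2) / 2)

/-!
Write `T = μ + σ Z` with `Z` standard normal, so that `{T ≤ ξ(α)} = {Z ≤ x}` with `Φ(x) = α`.
Since the standard density satisfies `φ' = -u φ`, the truncated first moment is
`∫_{Z ≤ x} Z = -φ(x)`, and complementation (using `E T = μ` and that `T` has no atoms) gives the
upper tail. Both conditional means are then explicit,
`E[T ∣ T ≤ ξ] = μ - σ φ(x)/α` and `E[T ∣ T ≥ ξ] = μ + σ φ(x)/(1 - α)`,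
and the convex combination is algebra.
-/

open Real Set Filter Topology
open scoped NNReal

lemma setIntegral_Ici_eq_integral_sub_setIntegral_Iic {E : Type*} [NormedAddCommGroup E]
    [NormedSpace ℝ E] {ν : Measure ℝ} [NullSingletonClass ν] {f : ℝ → E} (hf : Integrable f ν)
    (c : ℝ) :
    ∫ y in Ici c, f y ∂ν = ∫ y, f y ∂ν - ∫ y in Iic c, f y ∂ν := by
  rw [setIntegral_congr_set Ioi_ae_eq_Ici.symm, ← compl_Iic, setIntegral_compl measurableSet_Iic hf]

lemma measureReal_Ici_eq_one_sub_measureReal_Iic {ν : Measure ℝ} [IsProbabilityMeasure ν]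
    [NullSingletonClass ν] (c : ℝ) : ν.real (Ici c) = 1 - ν.real (Iic c) := by
  rw [measureReal_congr Ioi_ae_eq_Ici.symm, ← compl_Iic,
    probReal_compl_eq_one_sub measurableSet_Iic]

namespace ProbabilityTheory

lemma HasLaw.setIntegral_comp {Ω 𝓧 E : Type*} {mΩ : MeasurableSpace Ω} {m𝓧 : MeasurableSpace 𝓧}
    [NormedAddCommGroup E] [NormedSpace ℝ E] {X : Ω → 𝓧} {ν : Measure 𝓧} {P : Measure Ω}
    (hX : HasLaw X ν P) {f : 𝓧 → E} (hf : AEStronglyMeasurable f ν) {s : Set 𝓧}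
    (hs : MeasurableSet s) :
    ∫ ω in X ⁻¹' s, f (X ω) ∂P = ∫ x in s, f x ∂ν := by
  rw [← hX.map_eq] at hf ⊢
  exact (setIntegral_map hs hf hX.aemeasurable).symm

lemma setIntegral_gaussianReal_eq_setIntegral_smul {E : Type*} [NormedAddCommGroup E]
    [NormedSpace ℝ E] {μ : ℝ} {v : ℝ≥0} (hv : v ≠ 0) (f : ℝ → E) {s : Set ℝ}
    (hs : MeasurableSet s) :
    ∫ x in s, f x ∂gaussianReal μ v = ∫ x in s, gaussianPDFReal μ v x • f x := by
  rw [gaussianReal_of_var_ne_zero _ hv, setIntegral_withDensity_eq_setIntegral_toReal_smul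
    (measurable_gaussianPDF _ _) (ae_of_all _ fun _ ↦ gaussianPDF_lt_top) f hs]
  simp only [toReal_gaussianPDF]

lemma gaussianReal_map_const_mul_add_const (σ : ℝ≥0) (μ : ℝ) :
    (gaussianReal 0 1).map (fun u ↦ σ * u + μ) = gaussianReal μ (σ ^ 2) := by
  have h := Measure.map_map (measurable_add_const μ) (measurable_const_mul (σ : ℝ))
    (μ := gaussianReal 0 1)
  simp only [Function.comp_def] at h
  rw [← h, gaussianReal_map_const_mul, gaussianReal_map_add_const]
  congr 1
  · ring
  · ext; simp

lemma gaussianPDFReal_zero_one (u : ℝ) :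
    gaussianPDFReal 0 1 u = (√(2 * π))⁻¹ * exp (-u ^ 2 / 2) := by
  simp [gaussianPDFReal]

lemma stdNormalCDF_eq_setIntegral_gaussianPDFReal (x : ℝ) :
    stdNormalCDF x = ∫ u in Iic x, gaussianPDFReal 0 1 u := by
  simp only [stdNormalCDF, gaussianPDFReal_zero_one, neg_div]

lemma hasDerivAt_gaussianPDFReal_zero_one (u : ℝ) :
    HasDerivAt (gaussianPDFReal 0 1) (-u * gaussianPDFReal 0 1 u) u := by
  have h : HasDerivAt (fun u : ℝ ↦ -u ^ 2 / 2) (-u) u :=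
    ((hasDerivAt_pow 2 u).neg.div_const 2).congr_deriv (by push_cast; ring)
  rw [funext gaussianPDFReal_zero_one]
  exact (h.exp.const_mul _).congr_deriv (by beta_reduce; ring)

lemma tendsto_gaussianPDFReal_zero_one_cocompact :
    Tendsto (gaussianPDFReal 0 1) (cocompact ℝ) (𝓝 0) := by
  have h := (tendsto_rpow_abs_mul_exp_neg_mul_sq_cocompact one_half_pos 0).const_mul (√(2 * π))⁻¹
  rw [mul_zero] at h
  refine h.congr fun u ↦ ?_
  rw [gaussianPDFReal_zero_one, rpow_zero, one_mul]
  ring_nf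

lemma integrable_mul_gaussianPDFReal_zero_one :
    Integrable fun u ↦ u * gaussianPDFReal 0 1 u := by
  refine ((integrable_mul_exp_neg_mul_sq one_half_pos).const_mul (√(2 * π))⁻¹).congr
    (ae_of_all _ fun u ↦ ?_)
  simp only [gaussianPDFReal_zero_one]
  ring_nf

lemma measureReal_Iic_gaussianReal_zero_one (x : ℝ) :
    (gaussianReal 0 1).real (Iic x) = stdNormalCDF x := by
  rw [measureReal_def, gaussianReal_apply_eq_integral 0 one_ne_zero,
    ENNReal.toReal_ofReal (integral_nonneg (gaussianPDFReal_nonneg 0 1)),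
    stdNormalCDF_eq_setIntegral_gaussianPDFReal]

lemma setIntegral_Iic_id_gaussianReal_zero_one (x : ℝ) :
    ∫ u in Iic x, u ∂gaussianReal 0 1 = -gaussianPDFReal 0 1 x := by
  rw [setIntegral_gaussianReal_eq_setIntegral_smul one_ne_zero _ measurableSet_Iic]
  have h := integral_Iic_of_hasDerivAt_of_tendsto' (a := x) (m := 0)
    (f := fun u ↦ -gaussianPDFReal 0 1 u) (fun u _ ↦ (hasDerivAt_gaussianPDFReal_zero_one u).neg)
    (by simpa using integrable_mul_gaussianPDFReal_zero_one.integrableOn)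
    (by simpa using (tendsto_gaussianPDFReal_zero_one_cocompact.mono_left atBot_le_cocompact).neg)
  simpa [mul_comm] using h

lemma preimage_const_mul_add_const_Iic {σ : ℝ} (hσ : 0 < σ) (μ x : ℝ) :
    (fun u ↦ σ * u + μ) ⁻¹' Iic (μ + σ * x) = Iic x := by
  ext u
  simp [add_comm μ, mul_le_mul_iff_right₀ hσ]

lemma measureReal_Iic_gaussianReal (μ : ℝ) {σ : ℝ≥0} (hσ : 0 < σ) (x : ℝ) :
    (gaussianReal μ (σ ^ 2)).real (Iic (μ + σ * x)) = stdNormalCDF x := by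
  rw [← gaussianReal_map_const_mul_add_const, map_measureReal_apply (by fun_prop) measurableSet_Iic,
    preimage_const_mul_add_const_Iic (mod_cast hσ), measureReal_Iic_gaussianReal_zero_one]

lemma setIntegral_Iic_id_gaussianReal (μ : ℝ) {σ : ℝ≥0} (hσ : 0 < σ) (x : ℝ) :
    ∫ y in Iic (μ + σ * x), y ∂gaussianReal μ (σ ^ 2)
      = μ * stdNormalCDF x - σ * gaussianPDFReal 0 1 x := by
  have hint : Integrable (fun u ↦ u) (gaussianReal 0 1) :=
    memLp_one_iff_integrable.1 (memLp_id_gaussianReal 1)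
  rw [← gaussianReal_map_const_mul_add_const, setIntegral_map (f := fun y ↦ y) measurableSet_Iic
    aestronglyMeasurable_id (by fun_prop), preimage_const_mul_add_const_Iic (mod_cast hσ),
    integral_add (hint.const_mul _).integrableOn (integrable_const _), integral_const_mul,
    setIntegral_const, setIntegral_Iic_id_gaussianReal_zero_one,
    measureReal_Iic_gaussianReal_zero_one, smul_eq_mul]
  ring

lemma measureReal_Ici_gaussianReal (μ : ℝ) {σ : ℝ≥0} (hσ : 0 < σ) (x : ℝ) :
    (gaussianReal μ (σ ^ 2)).real (Ici (μ + σ * x)) = 1 - stdNormalCDF x := by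
  have := nullSingletonClass_gaussianReal (μ := μ) (pow_ne_zero 2 hσ.ne')
  rw [measureReal_Ici_eq_one_sub_measureReal_Iic, measureReal_Iic_gaussianReal μ hσ]

lemma setIntegral_Ici_id_gaussianReal (μ : ℝ) {σ : ℝ≥0} (hσ : 0 < σ) (x : ℝ) :
    ∫ y in Ici (μ + σ * x), y ∂gaussianReal μ (σ ^ 2)
      = μ * (1 - stdNormalCDF x) + σ * gaussianPDFReal 0 1 x := by
  have := nullSingletonClass_gaussianReal (μ := μ) (pow_ne_zero 2 hσ.ne')
  have hint : Integrable (fun y ↦ y) (gaussianReal μ (σ ^ 2)) :=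
    memLp_one_iff_integrable.1 (memLp_id_gaussianReal 1)
  rw [setIntegral_Ici_eq_integral_sub_setIntegral_Iic hint, integral_id_gaussianReal,
    setIntegral_Iic_id_gaussianReal μ hσ]
  ring

end ProbabilityTheory

/-- `x` plays the role of `Φ⁻¹(α)` and `l` that of `λ`; each conditional expectation is unravelled
as `E[T ∣ A] = (∫_A T dP)/P(A)`. -/
theorem gaussian_combined_mean_travel_time_general
    {Ω : Type*} [MeasurableSpace Ω] (P : Measure Ω) [IsProbabilityMeasure P]
    (T : Ω → ℝ)
    (μ σ : ℝ) (hσ : 0 < σ)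
    (hT : Measure.map T P = gaussianReal μ ⟨σ ^ 2, sq_nonneg σ⟩)
    (α : ℝ) (hα : α ∈ Set.Ioo (0 : ℝ) 1)
    (l : ℝ)
    (x : ℝ) (hx : stdNormalCDF x = α) :
    l * ((∫ ω in {ω | T ω ≤ μ + σ * x}, T ω ∂P) / (P {ω | T ω ≤ μ + σ * x}).toReal)
      + (1 - l) *
        ((∫ ω in {ω | μ + σ * x ≤ T ω}, T ω ∂P) / (P {ω | μ + σ * x ≤ T ω}).toReal)
      = μ + (α - l) * σ / (Real.sqrt (2 * Real.pi) * α * (1 - α))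
          * Real.exp (-x ^ 2 / 2) := by
  obtain ⟨hα0, hα1⟩ := hα
  subst hx
  lift σ to ℝ≥0 using hσ.le
  replace hσ : 0 < σ := mod_cast hσ
  replace hT : P.map T = gaussianReal μ (σ ^ 2) := hT.trans (congrArg _ (by ext; simp))
  have hlaw : HasLaw T (gaussianReal μ (σ ^ 2)) P :=
    ⟨.of_map_ne_zero (by rw [hT]; exact IsProbabilityMeasure.ne_zero _), hT⟩
  have below_integral : ∫ ω in {ω | T ω ≤ μ + σ * x}, T ω ∂P
      = μ * stdNormalCDF x - σ * gaussianPDFReal 0 1 x :=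
    (hlaw.setIntegral_comp aestronglyMeasurable_id measurableSet_Iic).trans
      (setIntegral_Iic_id_gaussianReal μ hσ x)
  have above_integral : ∫ ω in {ω | μ + σ * x ≤ T ω}, T ω ∂P
      = μ * (1 - stdNormalCDF x) + σ * gaussianPDFReal 0 1 x :=
    (hlaw.setIntegral_comp aestronglyMeasurable_id measurableSet_Ici).trans
      (setIntegral_Ici_id_gaussianReal μ hσ x)
  have below_prob : P.real {ω | T ω ≤ μ + σ * x} = stdNormalCDF x :=
    (hlaw.measureReal_eq measurableSet_Iic).trans (measureReal_Iic_gaussianReal μ hσ x)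
  have above_prob : P.real {ω | μ + σ * x ≤ T ω} = 1 - stdNormalCDF x :=
    (hlaw.measureReal_eq measurableSet_Ici).trans (measureReal_Ici_gaussianReal μ hσ x)
  rw [← measureReal_def, ← measureReal_def, below_integral, above_integral, below_prob,
    above_prob, gaussianPDFReal_zero_one]
  have : 1 - stdNormalCDF x ≠ 0 := sub_ne_zero.2 hα1.ne'
  field_simp
  ring

/-- Equation (4) of the paper: for `T ~ N(μ, σ²)`, `α ∈ (0,1)`, `λ ∈ [0,1]` and
`ξ(α) = μ + σ·Φ⁻¹(α)`, the alpha-reliable combined mean travel time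
`ψ(α; λ) = λ·E[T ∣ T ≤ ξ(α)] + (1−λ)·E[T ∣ T ≥ ξ(α)]` satisfies
`ψ(α; λ) = μ + ((α−λ)·σ/(√(2π)·α·(1−α)))·exp(−[Φ⁻¹(α)]²/2)`.
Here `x` plays the role of `Φ⁻¹(α)` and `l` the role of `λ`, and conditional
expectations are unravelled as `E[T ∣ A] = (∫_A T dP)/P(A)`. -/
theorem gaussian_combined_mean_travel_time
    {Ω : Type*} [MeasurableSpace Ω] (P : Measure Ω) [IsProbabilityMeasure P]
    (T : Ω → ℝ) (hTmeas : Measurable T)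
    (μ σ : ℝ) (hσ : 0 < σ)
    (hT : Measure.map T P = gaussianReal μ ⟨σ ^ 2, sq_nonneg σ⟩)
    (α : ℝ) (hα : α ∈ Set.Ioo (0 : ℝ) 1)
    (l : ℝ) (hl : l ∈ Set.Icc (0 : ℝ) 1)
    (x : ℝ) (hx : stdNormalCDF x = α) :
    l * ((∫ ω in {ω | T ω ≤ μ + σ * x}, T ω ∂P) / (P {ω | T ω ≤ μ + σ * x}).toReal)
      + (1 - l) *
        ((∫ ω in {ω | μ + σ * x ≤ T ω}, T ω ∂P) / (P {ω | μ + σ * x ≤ T ω}).toReal)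
      = μ + (α - l) * σ / (Real.sqrt (2 * Real.pi) * α * (1 - α))
          * Real.exp (-x ^ 2 / 2) :=
  gaussian_combined_mean_travel_time_general P T μ σ hσ hT α hα l x hx
end

section
/- Let T be a real-valued random variable with the normal distribution N(μ, σ²), σ > 0, let α ∈ (0,1) and λ ∈ [0,1], let ξ(α) = μ + σ·Φ⁻¹(α), and let ψ(α; λ) = λ·E[T | T ≤ ξ(α)] + (1−λ)·E[T | T ≥ ξ(α)] be the alpha-reliable combined mean travel time. Then ψ(α; λ) < μ if and only if λ > α, ψ(α; λ) = μ if and only if λ = α, and ψ(α; λ) > μ if and only if λ < α. In particular, CMTT is risk-optimistic (below the mean) when λ > α, risk-neutral when λ = α, and risk-pessimistic (above the mean) when λ < α. -/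
/-! Write `φ` for the density of `N(μ, σ²)`, `ξ = μ + σx` and `q = σ² φ(ξ) > 0`. Since
`(t - μ) φ(t)` is the derivative of `-σ² φ(t)`, the truncated first moments are
`E[T; T ≤ ξ] = μα - q` and `E[T; T ≥ ξ] = μ(1 - α) + q`, where `α = P(T ≤ ξ) = Φ(x)`.
Hence `ψ - μ = q (α - λ) / (α (1 - α))`, whose sign is that of `α - λ`. -/

open MeasureTheory ProbabilityTheory

open Set
open scoped NNReal

namespace ProbabilityTheory

variable {μ : ℝ} {v : ℝ≥0}

lemma hasDerivAt_gaussianPDFReal (x : ℝ) :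
    HasDerivAt (gaussianPDFReal μ v) (-((x - μ) / v) * gaussianPDFReal μ v x) x := by
  have hexp : HasDerivAt (fun y => -(y - μ) ^ 2 / (2 * v)) (-((x - μ) / v)) x := by
    refine ((((hasDerivAt_id x).sub_const μ).pow 2).neg.div_const (2 * (v : ℝ))).congr_deriv ?_
    simp only [Nat.cast_ofNat, id_eq, Nat.add_one_sub_one, pow_one, mul_one]
    ring
  rw [gaussianPDFReal_def]
  exact (hexp.exp.const_mul _).congr_deriv (by ring)

lemma setIntegral_gaussianReal_eq_setIntegral_mul (hv : v ≠ 0) (f : ℝ → ℝ) (s : Set ℝ) :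
    ∫ x in s, f x ∂gaussianReal μ v = ∫ x in s, gaussianPDFReal μ v x * f x := by
  rw [gaussianReal_of_var_ne_zero _ hv, setIntegral_withDensity_eq_setIntegral_toReal_smul' s
    (measurable_gaussianPDF μ v) (ae_of_all _ fun _ => gaussianPDF_lt_top)]
  simp only [toReal_gaussianPDF, smul_eq_mul]

lemma integrable_sub_mul_gaussianPDFReal (hv : v ≠ 0) :
    Integrable fun x => (x - μ) * gaussianPDFReal μ v x := by
  have hid : Integrable (fun x => x - μ) (gaussianReal μ v) :=
    ((memLp_id_gaussianReal 1).integrable le_rfl).sub (integrable_const μ)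
  rw [gaussianReal_of_var_ne_zero _ hv,
    integrable_withDensity_iff_integrable_smul' (measurable_gaussianPDF μ v)
      (ae_of_all _ fun _ => gaussianPDF_lt_top)] at hid
  simpa only [toReal_gaussianPDF, smul_eq_mul, mul_comm] using hid

lemma hasDerivAt_neg_var_mul_gaussianPDFReal (hv : v ≠ 0) (x : ℝ) :
    HasDerivAt (fun y => -(v * gaussianPDFReal μ v y)) ((x - μ) * gaussianPDFReal μ v x) x := by
  refine ((hasDerivAt_gaussianPDFReal x).const_mul (v : ℝ)).neg.congr_deriv ?_
  field_simp [NNReal.coe_ne_zero.mpr hv]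

lemma setIntegral_Iic_sub_mul_gaussianPDFReal (hv : v ≠ 0) (a : ℝ) :
    ∫ x in Iic a, (x - μ) * gaussianPDFReal μ v x = -(v * gaussianPDFReal μ v a) := by
  have hderiv := fun x (_ : x ∈ Iic a) => hasDerivAt_neg_var_mul_gaussianPDFReal (μ := μ) hv x
  have hint := (integrable_sub_mul_gaussianPDFReal (μ := μ) hv).integrableOn (s := Iic a)
  rw [integral_Iic_of_hasDerivAt_of_tendsto' hderiv hint
    (tendsto_zero_of_hasDerivAt_of_integrableOn_Iic hderiv hint
      ((integrable_gaussianPDFReal μ v).const_mul _).neg.integrableOn), sub_zero]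

lemma setIntegral_Ioi_sub_mul_gaussianPDFReal (hv : v ≠ 0) (a : ℝ) :
    ∫ x in Ioi a, (x - μ) * gaussianPDFReal μ v x = v * gaussianPDFReal μ v a := by
  have hderiv := fun x (_ : x ∈ Ici a) => hasDerivAt_neg_var_mul_gaussianPDFReal (μ := μ) hv x
  have hint := (integrable_sub_mul_gaussianPDFReal (μ := μ) hv).integrableOn (s := Ioi a)
  rw [integral_Ioi_of_hasDerivAt_of_tendsto' hderiv hint
    (tendsto_zero_of_hasDerivAt_of_integrableOn_Ioi (fun x hx => hderiv x hx.out.le) hint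
      ((integrable_gaussianPDFReal μ v).const_mul _).neg.integrableOn), zero_sub, neg_neg]

lemma setIntegral_id_gaussianReal_eq_add (hv : v ≠ 0) (s : Set ℝ) :
    ∫ x in s, x ∂gaussianReal μ v
      = μ * (gaussianReal μ v).real s + ∫ x in s, (x - μ) * gaussianPDFReal μ v x := by
  have hid : IntegrableOn (fun x => x) s (gaussianReal μ v) :=
    ((memLp_id_gaussianReal 1).integrable le_rfl).integrableOn
  calc ∫ x in s, x ∂gaussianReal μ v = ∫ x in s, (μ + (x - μ)) ∂gaussianReal μ v := by
        simp only [add_sub_cancel]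
    _ = μ * (gaussianReal μ v).real s + ∫ x in s, (x - μ) ∂gaussianReal μ v := by
        rw [integral_add (integrable_const μ) (g := fun x => x - μ) (hid.sub (integrable_const μ)),
          setIntegral_const, smul_eq_mul, mul_comm]
    _ = _ := by
        simp_rw [setIntegral_gaussianReal_eq_setIntegral_mul hv, mul_comm]

lemma setIntegral_Iic_id_gaussianReal_s6 (hv : v ≠ 0) (a : ℝ) :
    ∫ x in Iic a, x ∂gaussianReal μ v
      = μ * (gaussianReal μ v).real (Iic a) - v * gaussianPDFReal μ v a := by
  rw [setIntegral_id_gaussianReal_eq_add hv, setIntegral_Iic_sub_mul_gaussianPDFReal hv,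
    sub_eq_add_neg]

lemma setIntegral_Ici_id_gaussianReal_s6 (hv : v ≠ 0) (a : ℝ) :
    ∫ x in Ici a, x ∂gaussianReal μ v
      = μ * (gaussianReal μ v).real (Ici a) + v * gaussianPDFReal μ v a := by
  rw [setIntegral_id_gaussianReal_eq_add hv, integral_Ici_eq_integral_Ioi,
    setIntegral_Ioi_sub_mul_gaussianPDFReal hv]

lemma gaussianReal_real_Ici (hv : v ≠ 0) (a : ℝ) :
    (gaussianReal μ v).real (Ici a) = 1 - (gaussianReal μ v).real (Iic a) := by
  have := nullSingletonClass_gaussianReal (μ := μ) hv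
  rw [← measureReal_congr Ioi_ae_eq_Ici, ← compl_Iic, probReal_compl_eq_one_sub measurableSet_Iic]

end ProbabilityTheory

lemma gaussianReal_zero_one_map_affine (μ σ : ℝ) :
    (gaussianReal 0 1).map (fun z => μ + σ * z) = gaussianReal μ ⟨σ ^ 2, sq_nonneg σ⟩ := by
  rw [show (fun z => μ + σ * z) = (μ + ·) ∘ (σ * ·) from rfl,
    ← Measure.map_map (measurable_const_add μ) (measurable_const_mul σ),
    gaussianReal_map_const_mul, gaussianReal_map_const_add]
  congr
  · ring
  · rw [mul_one]; rfl

lemma stdNormalCDF_eq_gaussianReal_real_Iic (x : ℝ) :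
    stdNormalCDF x = (gaussianReal 0 1).real (Iic x) := by
  rw [measureReal_def, gaussianReal_apply_eq_integral 0 one_ne_zero,
    ENNReal.toReal_ofReal
      (setIntegral_nonneg measurableSet_Iic fun _ _ => gaussianPDFReal_nonneg _ _ _)]
  simp [stdNormalCDF, gaussianPDFReal]

lemma gaussianReal_real_Iic_add_mul (μ : ℝ) {σ : ℝ} (hσ : 0 < σ) (x : ℝ) :
    (gaussianReal μ ⟨σ ^ 2, sq_nonneg σ⟩).real (Iic (μ + σ * x)) = stdNormalCDF x := by
  have hpre : (fun z => μ + σ * z) ⁻¹' Iic (μ + σ * x) = Iic x := by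
    ext z
    simp [mul_le_mul_iff_right₀ hσ]
  rw [← gaussianReal_zero_one_map_affine, map_measureReal_apply (by fun_prop) measurableSet_Iic,
    hpre, stdNormalCDF_eq_gaussianReal_real_Iic]

lemma iff_lt_and_iff_eq_and_iff_gt_of_sub_eq_mul {ψ μ α l k : ℝ} (hk : 0 < k)
    (h : ψ - μ = k * (α - l)) : (ψ < μ ↔ α < l) ∧ (ψ = μ ↔ l = α) ∧ (μ < ψ ↔ l < α) := by
  refine ⟨?_, ?_, ?_⟩
  · rw [← sub_neg, h, ← mul_zero k, mul_lt_mul_iff_right₀ hk, sub_neg]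
  · rw [← sub_eq_zero, h, mul_eq_zero, or_iff_right hk.ne', sub_eq_zero, eq_comm]
  · rw [← sub_pos, h, mul_pos_iff_of_pos_left hk, sub_pos]

/-- `l` stands for `λ` and `x` for `Φ⁻¹(α)`. -/
theorem gaussian_cmtt_risk_attitude_trichotomy_general
    {Ω : Type*} [MeasurableSpace Ω] (P : Measure Ω) [IsProbabilityMeasure P]
    (T : Ω → ℝ) (hTmeas : Measurable T)
    (μ σ : ℝ) (hσ : 0 < σ)
    (hT : Measure.map T P = gaussianReal μ ⟨σ ^ 2, sq_nonneg σ⟩)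
    (α : ℝ) (hα : α ∈ Set.Ioo (0 : ℝ) 1)
    (l : ℝ)
    (x : ℝ) (hx : stdNormalCDF x = α)
    (ψ : ℝ)
    (hψ : ψ = l * ((∫ ω in {ω | T ω ≤ μ + σ * x}, T ω ∂P)
                      / (P {ω | T ω ≤ μ + σ * x}).toReal)
            + (1 - l) * ((∫ ω in {ω | μ + σ * x ≤ T ω}, T ω ∂P)
                      / (P {ω | μ + σ * x ≤ T ω}).toReal)) :
    (ψ < μ ↔ α < l) ∧ (ψ = μ ↔ l = α) ∧ (μ < ψ ↔ l < α) := by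
  set v : ℝ≥0 := ⟨σ ^ 2, sq_nonneg σ⟩
  set ξ := μ + σ * x
  have hv : v ≠ 0 := NNReal.coe_ne_zero.mp (pow_pos hσ 2).ne'
  have hlaw : ∀ s, MeasurableSet s → ∫ ω in T ⁻¹' s, T ω ∂P = ∫ t in s, t ∂gaussianReal μ v ∧
      P.real (T ⁻¹' s) = (gaussianReal μ v).real s := fun s hs =>
    ⟨by rw [← hT]; exact (setIntegral_map hs aestronglyMeasurable_id hTmeas.aemeasurable).symm,
      by rw [← hT, map_measureReal_apply hTmeas hs]⟩
  change ψ = l * ((∫ ω in T ⁻¹' Iic ξ, T ω ∂P) / P.real (T ⁻¹' Iic ξ))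
      + (1 - l) * ((∫ ω in T ⁻¹' Ici ξ, T ω ∂P) / P.real (T ⁻¹' Ici ξ)) at hψ
  rw [(hlaw _ measurableSet_Iic).1, (hlaw _ measurableSet_Iic).2, (hlaw _ measurableSet_Ici).1,
    (hlaw _ measurableSet_Ici).2, setIntegral_Iic_id_gaussianReal_s6 hv,
    setIntegral_Ici_id_gaussianReal_s6 hv, gaussianReal_real_Ici hv,
    gaussianReal_real_Iic_add_mul μ hσ, hx] at hψ
  set q := v * gaussianPDFReal μ v ξ
  have hq : 0 < q :=
    mul_pos (NNReal.coe_pos.mpr (pos_iff_ne_zero.mpr hv)) (gaussianPDFReal_pos _ _ _ hv)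
  obtain ⟨hα0, hα1⟩ := hα
  refine iff_lt_and_iff_eq_and_iff_gt_of_sub_eq_mul (k := q / (α * (1 - α)))
    (div_pos hq (mul_pos hα0 (sub_pos.2 hα1))) ?_
  rw [hψ]
  field_simp
  ring

/-- For `T ~ N(μ, σ²)`, `α ∈ (0,1)`, `λ ∈ [0,1]` and `ξ(α) = μ + σ·Φ⁻¹(α)`, the
alpha-reliable combined mean travel time
`ψ(α; λ) = λ·E[T ∣ T ≤ ξ(α)] + (1−λ)·E[T ∣ T ≥ ξ(α)]` satisfies:
`ψ(α; λ) < μ ↔ λ > α`, `ψ(α; λ) = μ ↔ λ = α`, and `ψ(α; λ) > μ ↔ λ < α`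
(risk-optimistic, risk-neutral, risk-pessimistic respectively).
Here `x` plays the role of `Φ⁻¹(α)` and `l` the role of `λ`, and conditional
expectations are unravelled as `E[T ∣ A] = (∫_A T dP)/P(A)`. -/
theorem gaussian_cmtt_risk_attitude_trichotomy
    {Ω : Type*} [MeasurableSpace Ω] (P : Measure Ω) [IsProbabilityMeasure P]
    (T : Ω → ℝ) (hTmeas : Measurable T)
    (μ σ : ℝ) (hσ : 0 < σ)
    (hT : Measure.map T P = gaussianReal μ ⟨σ ^ 2, sq_nonneg σ⟩)
    (α : ℝ) (hα : α ∈ Set.Ioo (0 : ℝ) 1)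
    (l : ℝ) (hl : l ∈ Set.Icc (0 : ℝ) 1)
    (x : ℝ) (hx : stdNormalCDF x = α)
    (ψ : ℝ)
    (hψ : ψ = l * ((∫ ω in {ω | T ω ≤ μ + σ * x}, T ω ∂P)
                      / (P {ω | T ω ≤ μ + σ * x}).toReal)
            + (1 - l) * ((∫ ω in {ω | μ + σ * x ≤ T ω}, T ω ∂P)
                      / (P {ω | μ + σ * x ≤ T ω}).toReal)) :
    (ψ < μ ↔ α < l) ∧ (ψ = μ ↔ l = α) ∧ (μ < ψ ↔ l < α) :=
  gaussian_cmtt_risk_attitude_trichotomy_general P T hTmeas μ σ hσ hT α hα l x hx ψ hψ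
end

section
/- Let T be a real-valued random variable with the normal distribution N(μ, σ²), σ > 0, and let α ∈ (0,1). With ξ(α) = μ + σ·Φ⁻¹(α), the alpha-reliable mean-excess travel time is strictly larger than the mean travel time for every α ∈ (0,1): E[T | T ≥ ξ(α)] > μ. (METT is a universally risk-pessimistic travel time index.) -/
open MeasureTheory ProbabilityTheory

/-!
Conditioning on an upper tail `{ξ ≤ T}` raises the mean whenever both the tail and its
complement have positive probability. If `ξ` lies above the mean `m`, the tail average is at
least `ξ > m`. Otherwise the complement `{T < ξ}` averages strictly below `ξ ≤ m`, and since the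
two parts average to `m`, the tail must average strictly above `m`. A nondegenerate Gaussian
charges every half-line, so this applies at every threshold `μ + σ x`.
-/

open Set

section TailMean

variable {Ω : Type*} [MeasurableSpace Ω] {P : Measure Ω}

theorem setIntegral_lt_const_mul_measureReal {f : Ω → ℝ} {c : ℝ} {s : Set Ω}
    (hs : MeasurableSet s) (hPs : P s ≠ 0) (hPs_top : P s ≠ ⊤) (hf : ∀ ω ∈ s, f ω < c)
    (hfi : IntegrableOn f s P) :
    ∫ ω in s, f ω ∂P < c * P.real s := by
  have hci : IntegrableOn (fun _ ↦ c) s P := integrableOn_const hPs_top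
  have hpos : 0 < ∫ ω in s, (c - f ω) ∂P := by
    rw [setIntegral_pos_iff_support_of_nonneg_ae
      ((ae_restrict_mem hs).mono fun ω hω ↦ (sub_pos.2 (hf ω hω)).le) (hci.sub hfi)]
    exact (pos_iff_ne_zero.2 hPs).trans_le
      (measure_mono fun ω hω ↦ ⟨(sub_pos.2 (hf ω hω)).ne', hω⟩)
  rw [integral_sub hci hfi, setIntegral_const, smul_eq_mul] at hpos
  linarith

theorem integral_lt_setIntegral_div_measureReal_setOf_le [IsProbabilityMeasure P] {T : Ω → ℝ}
    (hTm : Measurable T) (hTi : Integrable T P) {ξ : ℝ}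
    (hge : P {ω | ξ ≤ T ω} ≠ 0) (hlt : P {ω | T ω < ξ} ≠ 0) :
    P[T] < (∫ ω in {ω | ξ ≤ T ω}, T ω ∂P) / P.real {ω | ξ ≤ T ω} := by
  set A := {ω | ξ ≤ T ω}
  have hPA : 0 < P.real A := ENNReal.toReal_pos hge (measure_ne_top _ _)
  have hA : MeasurableSet A := measurableSet_le measurable_const hTm
  have hAc : Aᶜ = {ω | T ω < ξ} := by ext; simp [A]
  rw [lt_div_iff₀ hPA]
  rcases lt_or_ge P[T] ξ with hξ | hξ
  · calc P[T] * P.real A < ξ * P.real A := mul_lt_mul_of_pos_right hξ hPA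
      _ ≤ ∫ ω in A, T ω ∂P :=
        setIntegral_ge_of_const_le_real hA (measure_ne_top _ _) (fun _ hω ↦ hω) hTi.integrableOn
  · have hlow : ∫ ω in Aᶜ, T ω ∂P < ξ * P.real Aᶜ :=
      setIntegral_lt_const_mul_measureReal hA.compl (hAc ▸ hlt) (measure_ne_top _ _)
        (fun _ hω ↦ not_le.1 hω) hTi.integrableOn
    have hsplit := integral_add_compl hA hTi
    have hweight : P[T] * P.real A = P[T] - P[T] * P.real Aᶜ := by
      linear_combination P[T] * probReal_add_probReal_compl (μ := P) hA
    have hmono : ξ * P.real Aᶜ ≤ P[T] * P.real Aᶜ :=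
      mul_le_mul_of_nonneg_right hξ measureReal_nonneg
    linarith

end TailMean

section Gaussian

open scoped NNReal

theorem gaussianReal_ne_zero_of_volume_ne_zero (μ : ℝ) {v : ℝ≥0} (hv : v ≠ 0) {s : Set ℝ}
    (hs : volume s ≠ 0) : gaussianReal μ v s ≠ 0 :=
  fun h ↦ hs (gaussianReal_absolutelyContinuous' μ hv h)

theorem integral_lt_setIntegral_div_of_hasLaw_gaussianReal {Ω : Type*} [MeasurableSpace Ω]
    {P : Measure Ω} [IsProbabilityMeasure P] {T : Ω → ℝ} (hTm : Measurable T) {μ : ℝ} {v : ℝ≥0}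
    (hv : v ≠ 0) (hT : HasLaw T (gaussianReal μ v) P) (ξ : ℝ) :
    μ < (∫ ω in {ω | ξ ≤ T ω}, T ω ∂P) / P.real {ω | ξ ≤ T ω} := by
  have hTi : Integrable T P := by
    refine (integrable_map_measure aestronglyMeasurable_id hTm.aemeasurable).1 ?_
    rw [hT.map_eq]
    exact (memLp_id_gaussianReal 1).integrable le_rfl
  have hmean : P[T] = μ := by rw [hT.integral_eq, integral_id_gaussianReal]
  rw [← hmean]
  refine integral_lt_setIntegral_div_measureReal_setOf_le hTm hTi ?_ ?_
  · rw [hT.measure_eq (p := (ξ ≤ ·)) measurableSet_Ici]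
    exact gaussianReal_ne_zero_of_volume_ne_zero μ hv (s := Ici ξ) (by simp)
  · rw [hT.measure_eq (p := (· < ξ)) measurableSet_Iio]
    exact gaussianReal_ne_zero_of_volume_ne_zero μ hv (s := Iio ξ) (by simp)

end Gaussian

theorem gaussian_mett_gt_mean_general
    {Ω : Type*} [MeasurableSpace Ω] (P : Measure Ω) [IsProbabilityMeasure P]
    (T : Ω → ℝ) (hTmeas : Measurable T)
    (μ σ : ℝ) (hσ : 0 < σ)
    (hT : Measure.map T P = gaussianReal μ ⟨σ ^ 2, sq_nonneg σ⟩)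
    (x : ℝ) :
    μ < (∫ ω in {ω | μ + σ * x ≤ T ω}, T ω ∂P) / (P {ω | μ + σ * x ≤ T ω}).toReal := by
  have hv : (⟨σ ^ 2, sq_nonneg σ⟩ : NNReal) ≠ 0 :=
    ne_of_gt (show (0 : ℝ) < σ ^ 2 by positivity)
  exact integral_lt_setIntegral_div_of_hasLaw_gaussianReal hTmeas hv
    ⟨hTmeas.aemeasurable, hT⟩ (μ + σ * x)

/-- For `T ~ N(μ, σ²)` and every `α ∈ (0,1)`, with `ξ(α) = μ + σ·Φ⁻¹(α)`, the
alpha-reliable mean-excess travel time is strictly above the mean: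
`E[T ∣ T ≥ ξ(α)] > μ` (METT is a universally risk-pessimistic index).
Here `x` plays the role of `Φ⁻¹(α)`, and the conditional expectation is
unravelled as `E[T ∣ A] = (∫_A T dP)/P(A)`. -/
theorem gaussian_mett_gt_mean
    {Ω : Type*} [MeasurableSpace Ω] (P : Measure Ω) [IsProbabilityMeasure P]
    (T : Ω → ℝ) (hTmeas : Measurable T)
    (μ σ : ℝ) (hσ : 0 < σ)
    (hT : Measure.map T P = gaussianReal μ ⟨σ ^ 2, sq_nonneg σ⟩)
    (α : ℝ) (hα : α ∈ Set.Ioo (0 : ℝ) 1)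
    (x : ℝ) (hx : stdNormalCDF x = α) :
    μ < (∫ ω in {ω | μ + σ * x ≤ T ω}, T ω ∂P) / (P {ω | μ + σ * x ≤ T ω}).toReal :=
  gaussian_mett_gt_mean_general P T hTmeas μ σ hσ hT x
end
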